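/- arXiv:1904.05102 — 3 statements merged into one kernel-verified Lean document; each statement's English description precedes it below -/
import Mathlib

section
/- Let Ω ⊆ ℝ³ be a measurable set, T > 0, and let p' ∈ (2, ∞), q' ∈ (2, 6) satisfy 3/q' + 2/p' = 3/2. Let u : ℝ → ℝ³ → ℝ³ be measurable with M_∞ := esssup_{t ∈ (0,T)} ‖u t‖_{L²(Ω)} < ∞ and M₆ := (∫₀ᵀ ‖u t‖_{L⁶(Ω)}² dt)^{1/2} < ∞. Then (∫₀ᵀ ‖u t‖_{L^{q'}(Ω)}^{p'} dt)^{1/p'} ≤ M_∞ + M₆. -/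
/-!
At each time, Hölder's inequality interpolates the `L^{q'}` norm between `L²` and `L⁶`:
`‖u‖_{q'} ≤ ‖u‖₂^θ ‖u‖₆^{1-θ}` with `θ = 1 - 2/p'`, the relation `3/q' + 2/p' = 3/2` being
exactly `1/q' = θ/2 + (1-θ)/6`. Raised to the power `p'`, the `L⁶` factor becomes `‖u‖₆²`,
which is integrable in time, while the `L²` factor is bounded by its essential supremum.
Hence the mixed norm is at most `M_∞^θ M₆^{1-θ} ≤ M_∞ + M₆`.
-/

open MeasureTheory ENNReal

theorem ENNReal.rpow_mul_rpow_one_sub_le_add (a b : ℝ≥0∞) {θ : ℝ} (hθ₀ : 0 ≤ θ) (hθ₁ : θ ≤ 1) :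
    a ^ θ * b ^ (1 - θ) ≤ a + b :=
  calc a ^ θ * b ^ (1 - θ) ≤ (a + b) ^ θ * (a + b) ^ (1 - θ) := by
        gcongr
        exacts [le_self_add, le_add_self]
    _ = a + b := by rw [← ENNReal.rpow_add_of_nonneg _ _ hθ₀ (by linarith)]; simp

section

variable {α ε : Type*} [MeasurableSpace α] {μ : Measure α} [TopologicalSpace ε] [ContinuousENorm ε]

theorem eLpNorm'_le_eLpNorm'_rpow_mul_eLpNorm'_rpow {f : α → ε} (hf : AEStronglyMeasurable f μ)
    {p₀ p₁ q θ : ℝ} (hp₀ : 0 < p₀) (hp₁ : 0 < p₁) (hθ₀ : 0 < θ) (hθ₁ : θ < 1)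
    (hq : 1 / q = θ / p₀ + (1 - θ) / p₁) :
    eLpNorm' f q μ ≤ eLpNorm' f p₀ μ ^ θ * eLpNorm' f p₁ μ ^ (1 - θ) := by
  have hθ₁' : 0 < 1 - θ := by linarith
  have hq₀ : 0 < q := one_div_pos.mp (by rw [hq]; positivity)
  have hq_lt : q < p₀ / θ := lt_of_one_div_lt_one_div (by positivity) <| by
    rw [hq, one_div_div]; exact lt_add_of_pos_right _ (by positivity)
  have holder := ENNReal.lintegral_Lp_mul_le_Lq_mul_Lr (r := p₁ / (1 - θ)) hq₀ hq_lt
    (by rw [one_div_div, one_div_div, hq]) μ (hf.enorm.pow_const θ) (hf.enorm.pow_const (1 - θ))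
  have hsplit (x : α) : ‖f x‖ₑ ^ θ * ‖f x‖ₑ ^ (1 - θ) = ‖f x‖ₑ := by
    rw [← ENNReal.rpow_add_of_nonneg _ _ hθ₀.le hθ₁'.le, add_sub_cancel, ENNReal.rpow_one]
  have hpow {c p : ℝ} (hc : 0 < c) (x : α) : (‖f x‖ₑ ^ c) ^ (p / c) = ‖f x‖ₑ ^ p := by
    rw [← ENNReal.rpow_mul, mul_div_cancel₀ _ hc.ne']
  have hroot {c p : ℝ} (hc : 0 < c) (I : ℝ≥0∞) : I ^ (1 / (p / c)) = (I ^ (1 / p)) ^ c := by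
    rw [← ENNReal.rpow_mul, one_div_div, div_eq_mul_one_div, mul_comm]
  simp only [Pi.mul_apply, hsplit, hpow hθ₀, hpow hθ₁', hroot hθ₀, hroot hθ₁'] at holder
  exact holder

end

section

variable {β : Type*} [MeasurableSpace β] {ν : Measure β}

theorem lintegral_rpow_le_of_le_rpow_mul_rpow {F A B : β → ℝ≥0∞} {M : ℝ≥0∞} (hM : M ≠ ⊤)
    {θ p r : ℝ} (hθ₀ : 0 ≤ θ) (hθ₁ : θ < 1) (hp : 0 < p) (hr : (1 - θ) * p = r)
    (hF : ∀ᵐ t ∂ν, F t ≤ A t ^ θ * B t ^ (1 - θ)) (hA : ∀ᵐ t ∂ν, A t ≤ M) :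
    (∫⁻ t, F t ^ p ∂ν) ^ (1 / p) ≤ M ^ θ * ((∫⁻ t, B t ^ r ∂ν) ^ (1 / r)) ^ (1 - θ) := by
  have hθ₁' : 0 < 1 - θ := by linarith
  have hMθ : M ^ (θ * p) ≠ ⊤ := ENNReal.rpow_ne_top_of_nonneg (by positivity) hM
  calc (∫⁻ t, F t ^ p ∂ν) ^ (1 / p) ≤ (∫⁻ t, M ^ (θ * p) * B t ^ r ∂ν) ^ (1 / p) := by
        gcongr ?_ ^ _
        refine lintegral_mono_ae ?_
        filter_upwards [hF, hA] with t hFt hAt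
        calc F t ^ p ≤ (A t ^ θ * B t ^ (1 - θ)) ^ p := by gcongr
          _ = A t ^ (θ * p) * B t ^ r := by
            rw [ENNReal.mul_rpow_of_nonneg _ _ hp.le, ← ENNReal.rpow_mul, ← ENNReal.rpow_mul, hr]
          _ ≤ M ^ (θ * p) * B t ^ r := by gcongr
    _ = M ^ θ * ((∫⁻ t, B t ^ r ∂ν) ^ (1 / r)) ^ (1 - θ) := by
        rw [lintegral_const_mul' _ _ hMθ, ENNReal.mul_rpow_of_nonneg _ _ (by positivity),
          ← ENNReal.rpow_mul, ← ENNReal.rpow_mul]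
        subst hr
        have := hθ₁'.ne'
        congr 2 <;> field_simp

end

theorem mixed_interpolation_Linfty_L2_general
    (Ω : Set (EuclideanSpace ℝ (Fin 3)))
    (T p' q' : ℝ)
    (hp' : 2 < p') (hq'₁ : 2 < q')
    (hpq : 3 / q' + 2 / p' = 3 / 2)
    (u : ℝ → EuclideanSpace ℝ (Fin 3) → EuclideanSpace ℝ (Fin 3))
    (hmeas : Measurable (Function.uncurry u))
    (Minf M6 : ℝ≥0∞)
    (hMinf : Minf = essSup (fun t => eLpNorm (u t) 2 (volume.restrict Ω))
      (volume.restrict (Set.Ioo 0 T)))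
    (hM6 : M6 = (∫⁻ t in Set.Ioo 0 T,
        eLpNorm (u t) 6 (volume.restrict Ω) ^ (2 : ℝ)) ^ ((1 : ℝ) / 2))
    (hMinf_fin : Minf < ⊤) :
    (∫⁻ t in Set.Ioo 0 T,
        eLpNorm (u t) (ENNReal.ofReal q') (volume.restrict Ω) ^ p') ^ (1 / p')
      ≤ Minf + M6 := by
  set θ : ℝ := 1 - 2 / p' with hθ
  have hθ₀ : 0 < θ := sub_pos.2 ((div_lt_one (by linarith)).2 hp')
  have hθ₁ : θ < 1 := sub_lt_self 1 (by positivity)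
  have hθp' : (1 - θ) * p' = 2 := by rw [hθ, _root_.sub_sub_cancel]; field_simp
  have hexp : 1 / q' = θ / 2 + (1 - θ) / 6 := by rw [hθ]; linear_combination hpq / 3
  have hspace (t : ℝ) : eLpNorm (u t) (ENNReal.ofReal q') (volume.restrict Ω) ≤
      eLpNorm (u t) 2 (volume.restrict Ω) ^ θ * eLpNorm (u t) 6 (volume.restrict Ω) ^ (1 - θ) := by
    rw [eLpNorm_eq_eLpNorm' (by positivity) ofReal_ne_top, toReal_ofReal (by linarith),
      eLpNorm_eq_eLpNorm' two_ne_zero ofNat_ne_top, eLpNorm_eq_eLpNorm' (by norm_num) ofNat_ne_top,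
      toReal_ofNat, toReal_ofNat]
    exact eLpNorm'_le_eLpNorm'_rpow_mul_eLpNorm'_rpow hmeas.of_uncurry_left.aestronglyMeasurable
      two_pos (by norm_num) hθ₀ hθ₁ hexp
  have htime := lintegral_rpow_le_of_le_rpow_mul_rpow hMinf_fin.ne hθ₀.le hθ₁ (by linarith) hθp'
    (Filter.Eventually.of_forall hspace) (hMinf ▸ ENNReal.ae_le_essSup _)
  calc _ ≤ Minf ^ θ * M6 ^ (1 - θ) := hM6 ▸ htime
    _ ≤ Minf + M6 := ENNReal.rpow_mul_rpow_one_sub_le_add _ _ hθ₀.le hθ₁.le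

/-- Lemma 9 (weak_estimates), interpolation step: a function in
`L^∞(0,T;L²(Ω)) ∩ L²(0,T;L⁶(Ω))` lies in `L^{p'}(0,T;L^{q'}(Ω))` for all
`p' ∈ (2,∞)`, `q' ∈ (2,6)` with `3/q' + 2/p' = 3/2`, with mixed norm bounded by
the sum of the two norms. -/
theorem mixed_interpolation_Linfty_L2
    (Ω : Set (EuclideanSpace ℝ (Fin 3))) (hΩ : MeasurableSet Ω)
    (T p' q' : ℝ) (hT : 0 < T)
    (hp' : 2 < p') (hq'₁ : 2 < q') (hq'₂ : q' < 6)
    (hpq : 3 / q' + 2 / p' = 3 / 2)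
    (u : ℝ → EuclideanSpace ℝ (Fin 3) → EuclideanSpace ℝ (Fin 3))
    (hmeas : Measurable (Function.uncurry u))
    (Minf M6 : ℝ≥0∞)
    (hMinf : Minf = essSup (fun t => eLpNorm (u t) 2 (volume.restrict Ω))
      (volume.restrict (Set.Ioo 0 T)))
    (hM6 : M6 = (∫⁻ t in Set.Ioo 0 T,
        eLpNorm (u t) 6 (volume.restrict Ω) ^ (2 : ℝ)) ^ ((1 : ℝ) / 2))
    (hMinf_fin : Minf < ⊤) (hM6_fin : M6 < ⊤) :
    (∫⁻ t in Set.Ioo 0 T,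
        eLpNorm (u t) (ENNReal.ofReal q') (volume.restrict Ω) ^ p') ^ (1 / p')
      ≤ Minf + M6 :=
  mixed_interpolation_Linfty_L2_general Ω T p' q' hp' hq'₁ hpq u hmeas Minf M6 hMinf hM6 hMinf_fin
end

section
/- Let Q₁, Q₂ : ℝ → Matrix (Fin 3) (Fin 3) ℝ be differentiable at t, with Q₁(t)ᵀ Q₁(t) = 1, Q₂(t)ᵀ Q₂(t) = 1, det Q₁(t) = 1, det Q₂(t) = 1, and let ω₁(t), ω₂(t) ∈ ℝ³ be such that for all x ∈ ℝ³, (Q₁'(t) Q₁(t)ᵀ).mulVec x = ω₁(t) ×₃ x and (Q₂'(t) Q₂(t)ᵀ).mulVec x = ω₂(t) ×₃ x, where Qᵢ' denotes the derivative of Qᵢ. Set Q(t) = Q₂(t) Q₁(t)ᵀ. Then for all x ∈ ℝ³, (Q(t)ᵀ Q'(t)).mulVec x = (Q(t)ᵀ.mulVec ω₂(t) − ω₁(t)) ×₃ x, where Q'(t) = Q₂'(t) Q₁(t)ᵀ + Q₂(t) Q₁'(t)ᵀ is the derivative of Q at t. -/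
/-!
Expanding the product rule with `Q₂ᵀ Q₂ = 1` gives
`Qᵀ Q' = Qᵀ (Q₂' Q₂ᵀ) Q + (Q₁' Q₁ᵀ)ᵀ`.
A matrix in SO(3) has its transpose as adjugate, hence preserves the cross product, so the first
term acts as `(Qᵀ ω₂) ×`. A matrix acting as `ω ×` is skew-symmetric, because the triple
product is alternating, so the second term acts as `-ω₁ ×`.
-/

open Matrix

namespace Matrix

variable {R : Type*} [CommRing R]

theorem mulVec_cross_mulVec (M : Matrix (Fin 3) (Fin 3) R) (a b : Fin 3 → R) :
    (M *ᵥ a) ⨯₃ (M *ᵥ b) = M.adjugateᵀ *ᵥ (a ⨯₃ b) := by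
  ext i
  fin_cases i <;>
    simp [cross_apply, mulVec, dotProduct, Fin.sum_univ_three, adjugate_fin_three] <;> ring

theorem adjugate_eq_transpose_of_transpose_mul_self {n : Type*} [Fintype n] [DecidableEq n]
    {M : Matrix n n R} (hM : Mᵀ * M = 1) (hdet : M.det = 1) : M.adjugate = Mᵀ := by
  calc M.adjugate = M.adjugate * (M * Mᵀ) := by rw [mul_eq_one_comm.mp hM, Matrix.mul_one]
    _ = Mᵀ := by rw [← Matrix.mul_assoc, adjugate_mul, hdet, one_smul, Matrix.one_mul]

theorem mulVec_cross_of_transpose_mul_self {M : Matrix (Fin 3) (Fin 3) R}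
    (hM : Mᵀ * M = 1) (hdet : M.det = 1) (a b : Fin 3 → R) :
    M *ᵥ (a ⨯₃ b) = (M *ᵥ a) ⨯₃ (M *ᵥ b) := by
  rw [mulVec_cross_mulVec, adjugate_eq_transpose_of_transpose_mul_self hM hdet,
    transpose_transpose]

theorem dotProduct_cross_eq_neg (ω u v : Fin 3 → R) : u ⬝ᵥ ω ⨯₃ v = -(v ⬝ᵥ ω ⨯₃ u) := by
  rw [triple_product_permutation, ← cross_anticomm, dotProduct_neg, ← triple_product_permutation]

theorem transpose_mulVec_of_mulVec_eq_cross {S : Matrix (Fin 3) (Fin 3) R} {ω : Fin 3 → R}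
    (hS : ∀ x, S *ᵥ x = ω ⨯₃ x) (x : Fin 3 → R) : Sᵀ *ᵥ x = -(ω ⨯₃ x) := by
  refine dotProduct_eq _ _ fun y => ?_
  calc Sᵀ *ᵥ x ⬝ᵥ y = x ⬝ᵥ S *ᵥ y := by rw [mulVec_transpose, dotProduct_mulVec]
    _ = -(ω ⨯₃ x) ⬝ᵥ y := by rw [hS, dotProduct_cross_eq_neg, neg_dotProduct, dotProduct_comm]

theorem transpose_mul_mul_mulVec_of_mulVec_eq_cross {M S : Matrix (Fin 3) (Fin 3) R}
    {ω : Fin 3 → R} (hM : M * Mᵀ = 1) (hdet : M.det = 1) (hS : ∀ x, S *ᵥ x = ω ⨯₃ x)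
    (x : Fin 3 → R) : (Mᵀ * S * M) *ᵥ x = (Mᵀ *ᵥ ω) ⨯₃ x := by
  have hMt : Mᵀᵀ * Mᵀ = 1 := by rwa [transpose_transpose]
  rw [← mulVec_mulVec, ← mulVec_mulVec, hS,
    mulVec_cross_of_transpose_mul_self hMt (by rwa [det_transpose]), mulVec_mulVec,
    mul_eq_one_comm.mp hM, one_mulVec]

theorem transpose_mul_add_mul_transpose {n : Type*} [Fintype n] [DecidableEq n]
    {A B A' B' : Matrix n n R} (hB : Bᵀ * B = 1) :
    (B * Aᵀ)ᵀ * (B' * Aᵀ + B * A'ᵀ) = (B * Aᵀ)ᵀ * (B' * Bᵀ) * (B * Aᵀ) + (A' * Aᵀ)ᵀ := by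
  simp only [transpose_mul, transpose_transpose, Matrix.mul_add]
  congr 1
  · simp only [Matrix.mul_assoc]
    rw [← Matrix.mul_assoc Bᵀ B, hB, Matrix.one_mul]
  · rw [Matrix.mul_assoc, ← Matrix.mul_assoc Bᵀ, hB, Matrix.one_mul]

end Matrix

theorem relative_angular_velocity_general
    (t : ℝ) (Q₁ Q₂ Q₁' Q₂' : ℝ → Matrix (Fin 3) (Fin 3) ℝ)
    (ω₁ ω₂ : ℝ → Fin 3 → ℝ)
    (ho₁ : (Q₁ t)ᵀ * Q₁ t = 1) (ho₂ : (Q₂ t)ᵀ * Q₂ t = 1)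
    (hdet₁ : (Q₁ t).det = 1) (hdet₂ : (Q₂ t).det = 1)
    (hω₁ : ∀ x : Fin 3 → ℝ, (Q₁' t * (Q₁ t)ᵀ).mulVec x = ω₁ t ⨯₃ x)
    (hω₂ : ∀ x : Fin 3 → ℝ, (Q₂' t * (Q₂ t)ᵀ).mulVec x = ω₂ t ⨯₃ x) :
    ∀ x : Fin 3 → ℝ,
      ((Q₂ t * (Q₁ t)ᵀ)ᵀ * (Q₂' t * (Q₁ t)ᵀ + Q₂ t * (Q₁' t)ᵀ)).mulVec x
        = ((Q₂ t * (Q₁ t)ᵀ)ᵀ.mulVec (ω₂ t) - ω₁ t) ⨯₃ x := by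
  intro x
  have hQ : (Q₂ t * (Q₁ t)ᵀ) * (Q₂ t * (Q₁ t)ᵀ)ᵀ = 1 := by
    rw [transpose_mul, transpose_transpose, Matrix.mul_assoc, ← Matrix.mul_assoc (Q₁ t)ᵀ, ho₁,
      Matrix.one_mul, mul_eq_one_comm.mp ho₂]
  have hdet : (Q₂ t * (Q₁ t)ᵀ).det = 1 := by rw [det_mul, det_transpose, hdet₁, hdet₂, one_mul]
  rw [transpose_mul_add_mul_transpose ho₂, add_mulVec,
    transpose_mul_mul_mulVec_of_mulVec_eq_cross hQ hdet hω₂,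
    transpose_mulVec_of_mulVec_eq_cross hω₁, map_sub, LinearMap.sub_apply, sub_eq_add_neg]

/-- Lemma 2 (estimateOmega): if rotations `Q₁, Q₂ ∈ SO(3)` have spatial angular
velocities `ω₁, ω₂` (i.e. `Qᵢ' Qᵢᵀ x = ωᵢ × x`), then the relative rotation
`Q = Q₂ Q₁ᵀ` satisfies `Qᵀ Q' x = (Qᵀ ω₂ − ω₁) × x`, i.e. its body angular
velocity is `ω̃ = Ω₂ − ω₁` with `Ω₂ = Qᵀ ω₂`. -/
theorem relative_angular_velocity
    (t : ℝ) (Q₁ Q₂ Q₁' Q₂' : ℝ → Matrix (Fin 3) (Fin 3) ℝ)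
    (ω₁ ω₂ : ℝ → Fin 3 → ℝ)
    (hd₁ : ∀ i j, HasDerivAt (fun τ => Q₁ τ i j) (Q₁' t i j) t)
    (hd₂ : ∀ i j, HasDerivAt (fun τ => Q₂ τ i j) (Q₂' t i j) t)
    (ho₁ : (Q₁ t)ᵀ * Q₁ t = 1) (ho₂ : (Q₂ t)ᵀ * Q₂ t = 1)
    (hdet₁ : (Q₁ t).det = 1) (hdet₂ : (Q₂ t).det = 1)
    (hω₁ : ∀ x : Fin 3 → ℝ, (Q₁' t * (Q₁ t)ᵀ).mulVec x = ω₁ t ⨯₃ x)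
    (hω₂ : ∀ x : Fin 3 → ℝ, (Q₂' t * (Q₂ t)ᵀ).mulVec x = ω₂ t ⨯₃ x) :
    ∀ x : Fin 3 → ℝ,
      ((Q₂ t * (Q₁ t)ᵀ)ᵀ * (Q₂' t * (Q₁ t)ᵀ + Q₂ t * (Q₁' t)ᵀ)).mulVec x
        = ((Q₂ t * (Q₁ t)ᵀ)ᵀ.mulVec (ω₂ t) - ω₁ t) ⨯₃ x :=
  relative_angular_velocity_general t Q₁ Q₂ Q₁' Q₂' ω₁ ω₂ ho₁ ho₂ hdet₁ hdet₂ hω₁ hω₂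
end

section
/- Let H be a real Hilbert space and let u, v : ℝ → H be continuous and bounded. Let j : ℝ → ℝ be a smooth, even, nonnegative function supported in (−1,1) with ∫_ℝ j = 1, and for h > 0 define the mollifications u^h(t) = ∫_ℝ h⁻¹ j((t−s)/h) u(s) ds and v^h(t) = ∫_ℝ h⁻¹ j((t−s)/h) v(s) ds. Then for every t ∈ ℝ, ∫₀ᵗ ( ⟨u(τ), (v^h)'(τ)⟩ + ⟨v(τ), (u^h)'(τ)⟩ ) dτ → ⟨u(t), v(t)⟩ − ⟨u(0), v(0)⟩ as h → 0⁺, where (u^h)' denotes the derivative of u^h. -/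
open MeasureTheory Filter

open Set

namespace ReynoldsAux

variable {j : ℝ → ℝ}

lemma jd_zero (hjnn : ∀ x, 0 ≤ j x) {x : ℝ} (hx : j x = 0) : deriv j x = 0 :=
  (IsLocalMin.deriv_eq_zero (Filter.Eventually.of_forall (fun y => by rw [hx]; exact hjnn y)))

lemma jd_supp (hjnn : ∀ x, 0 ≤ j x)
    (hjsupp : Function.support j ⊆ Set.Ioo (-1 : ℝ) 1) {z : ℝ} (hz : 1 ≤ |z|) :
    deriv j z = 0 := by
  apply jd_zero hjnn
  by_contra hne
  have : z ∈ Set.Ioo (-1 : ℝ) 1 := hjsupp hne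
  rw [Set.mem_Ioo, ← abs_lt] at this
  linarith

lemma j_zero (hjsupp : Function.support j ⊆ Set.Ioo (-1 : ℝ) 1) {z : ℝ} (hz : 1 ≤ |z|) :
    j z = 0 := by
  by_contra hne
  have : z ∈ Set.Ioo (-1 : ℝ) 1 := hjsupp hne
  rw [Set.mem_Ioo, ← abs_lt] at this
  linarith

lemma j_cps (hjsupp : Function.support j ⊆ Set.Ioo (-1 : ℝ) 1) : HasCompactSupport j := by
  apply HasCompactSupport.intro (isCompact_Icc (a := (-1:ℝ)) (b := 1))
  intro x hx
  apply j_zero hjsupp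
  rw [Set.mem_Icc, not_and_or, not_le, not_le] at hx
  rcases hx with h | h
  · rw [abs_of_neg (by linarith)]; linarith
  · rw [abs_of_pos (by linarith)]; linarith

lemma jd_odd (hj : ContDiff ℝ (⊤ : ℕ∞) j) (hjeven : ∀ x, j (-x) = j x) (x : ℝ) :
    deriv j (-x) = -deriv j x := by
  have h1 : (fun y => j (-y)) = j := funext hjeven
  have h2 : deriv (fun y => j (-y)) x = deriv j x := by rw [h1]
  rw [deriv_comp_neg] at h2
  linarith

lemma exists_bound (hf : Continuous j) (hjsupp : Function.support j ⊆ Set.Ioo (-1 : ℝ) 1) :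
    ∃ C : ℝ, 0 ≤ C ∧ ∀ x, |j x| ≤ C := by
  obtain ⟨C, hC⟩ := (isCompact_Icc (a := (-1:ℝ)) (b := 1)).exists_bound_of_continuousOn
    hf.continuousOn
  refine ⟨C, le_trans (norm_nonneg (j 0)) (hC 0 (by norm_num)), fun x => ?_⟩
  by_cases hx : x ∈ Set.Icc (-1:ℝ) 1
  · exact hC x hx
  · have : j x = 0 := by
      apply j_zero hjsupp
      rw [Set.mem_Icc, not_and_or, not_le, not_le] at hx
      rcases hx with h | h
      · rw [abs_of_neg (by linarith)]; linarith
      · rw [abs_of_pos (by linarith)]; linarith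
    rw [this, abs_zero]
    exact le_trans (norm_nonneg (j 0)) (hC 0 (by norm_num))

end ReynoldsAux

namespace ReynoldsAux

variable {j : ℝ → ℝ}

lemma j_integrable (hj : ContDiff ℝ (⊤ : ℕ∞) j)
    (hjsupp : Function.support j ⊆ Set.Ioo (-1 : ℝ) 1) : Integrable j :=
  hj.continuous.integrable_of_hasCompactSupport (j_cps hjsupp)

lemma j_half_Iic (hj : ContDiff ℝ (⊤ : ℕ∞) j) (hjeven : ∀ x, j (-x) = j x)
    (hjsupp : Function.support j ⊆ Set.Ioo (-1 : ℝ) 1)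
    (hjint : ∫ x, j x = 1) : ∫ x in Iic (0:ℝ), j x = 1/2 := by
  have e1 : ∫ x in Iic (0:ℝ), j (-x) = ∫ x in Ioi (-(0:ℝ)), j x := integral_comp_neg_Iic 0 j
  simp only [hjeven, neg_zero] at e1
  have hsum : (∫ x in Iic (0:ℝ), j x) + ∫ x in (Iic (0:ℝ))ᶜ, j x = ∫ x, j x :=
    integral_add_compl measurableSet_Iic (j_integrable hj hjsupp)
  rw [Set.compl_Iic, hjint, ← e1] at hsum
  linarith

lemma hasDerivAt_neg_comp (hj : ContDiff ℝ (⊤ : ℕ∞) j) (x y : ℝ) :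
    HasDerivAt (fun y => -j (x - y)) (deriv j (x - y)) y := by
  have h1 : HasDerivAt (fun y : ℝ => x - y) (-1) y := (hasDerivAt_id y).const_sub x
  have h2 := (((hj.differentiable (by simp)) (x - y)).hasDerivAt).comp y h1
  exact (h2.neg : HasDerivAt (fun y => -j (x - y)) (-(deriv j (x - y) * -1)) y).congr_deriv (by ring)

lemma inner_Ioi (hj : ContDiff ℝ (⊤ : ℕ∞) j) (hjnn : ∀ x, 0 ≤ j x)
    (hjsupp : Function.support j ⊆ Set.Ioo (-1 : ℝ) 1) (x : ℝ) :
    ∫ y in Ioi (0:ℝ), deriv j (x - y) = j x := by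
  set R : ℝ := |x| + 2 with hR
  have hR0 : (0:ℝ) ≤ R := by positivity
  have hcd : Continuous (deriv j) := hj.continuous_deriv (by simp)
  have hzero : ∀ y ∈ Ioi R, deriv j (x - y) = 0 := by
    intro y hy
    apply jd_supp hjnn hjsupp
    have h1 : x - y < -1 := by
      have : x ≤ |x| := le_abs_self x
      simp only [Set.mem_Ioi] at hy
      linarith
    rw [abs_of_neg (by linarith)]; linarith
  have hsplit : Ioc (0:ℝ) R ∪ Ioi R = Ioi 0 := Ioc_union_Ioi_eq_Ioi hR0
  have hi1 : IntegrableOn (fun y => deriv j (x - y)) (Ioc (0:ℝ) R) := by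
    apply Continuous.integrableOn_Ioc
    exact hcd.comp (continuous_const.sub continuous_id)
  have hi2 : IntegrableOn (fun y => deriv j (x - y)) (Ioi R) := by
    apply (integrableOn_congr_fun hzero measurableSet_Ioi).mpr
    exact integrableOn_zero
  have e0 : ∫ y in Ioi (0:ℝ), deriv j (x - y) =
      (∫ y in Ioc (0:ℝ) R, deriv j (x - y)) + ∫ y in Ioi R, deriv j (x - y) := by
    rw [← hsplit, setIntegral_union Ioc_disjoint_Ioi_same measurableSet_Ioi hi1 hi2]
  have e1 : ∫ y in Ioi R, deriv j (x - y) = 0 := by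
    rw [setIntegral_congr_fun measurableSet_Ioi hzero, integral_zero]
  have e2 : ∫ y in Ioc (0:ℝ) R, deriv j (x - y) = j x := by
    rw [← intervalIntegral.integral_of_le hR0]
    have hftc : ∫ y in (0:ℝ)..R, deriv j (x - y) = -j (x - R) - -j (x - 0) :=
      intervalIntegral.integral_eq_sub_of_hasDerivAt
        (f := fun y => -j (x - y)) (f' := fun y => deriv j (x - y)) (a := 0) (b := R)
        (fun y _ => hasDerivAt_neg_comp hj x y)
        ((hcd.comp (continuous_const.sub continuous_id)).intervalIntegrable 0 R)
    rw [hftc]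
    have hxr : j (x - R) = 0 := by
      apply j_zero hjsupp
      have hxa : x ≤ |x| := le_abs_self x
      rw [abs_of_neg (by simp only [hR]; linarith)]
      simp only [hR]; linarith
    rw [hxr, sub_zero]; ring_nf
  rw [e0, e1, e2, add_zero]

end ReynoldsAux

namespace ReynoldsAux

lemma inner_Iic {j : ℝ → ℝ} (hj : ContDiff ℝ (⊤ : ℕ∞) j) (hjeven : ∀ x, j (-x) = j x)
    (hjnn : ∀ x, 0 ≤ j x)
    (hjsupp : Function.support j ⊆ Set.Ioo (-1 : ℝ) 1) (x : ℝ) :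
    ∫ y in Iic (0:ℝ), deriv j (x - y) = -j x := by
  have e1 : ∫ y in Ioi (0:ℝ), deriv j (x - -y) = ∫ y in Iic (-(0:ℝ)), deriv j (x - y) :=
    integral_comp_neg_Ioi 0 (fun y => deriv j (x - y))
  rw [neg_zero] at e1
  rw [← e1]
  have e2 : ∀ y : ℝ, deriv j (x - -y) = -deriv j (-x - y) := by
    intro y
    have := jd_odd hj hjeven (-x - y)
    rw [neg_sub, sub_neg_eq_add] at this
    rw [sub_neg_eq_add, ← this]
    ring_nf
  simp only [e2]
  rw [integral_neg, inner_Ioi hj hjnn hjsupp (-x), hjeven]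

lemma scale_set {f : ℝ → ℝ} {c h : ℝ} (hh : 0 < h) {S T : Set ℝ}
    (hS : MeasurableSet S) (hT : MeasurableSet T)
    (hmem : ∀ y, c + h * y ∈ S ↔ y ∈ T) :
    ∫ σ in S, f σ = h * ∫ y in T, f (c + h * y) := by
  rw [← integral_indicator hS, ← integral_indicator hT]
  have e1 : (fun y => T.indicator (fun y => f (c + h * y)) y)
      = fun y => S.indicator f (c + h * y) := by
    funext y
    by_cases hy : y ∈ T
    · rw [Set.indicator_of_mem hy, Set.indicator_of_mem ((hmem y).mpr hy)]
    · rw [Set.indicator_of_notMem hy,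
        Set.indicator_of_notMem (fun hc => hy ((hmem y).mp hc))]
  rw [e1]
  have e2 : ∫ y : ℝ, S.indicator f (c + h * y)
      = |h⁻¹| • ∫ z : ℝ, S.indicator f (c + z) :=
    Measure.integral_comp_mul_left (fun z => S.indicator f (c + z)) h
  have e3 : ∫ z : ℝ, S.indicator f (c + z) = ∫ z : ℝ, S.indicator f z :=
    integral_add_left_eq_self (S.indicator f) c
  rw [e2, e3, abs_of_pos (inv_pos.mpr hh), smul_eq_mul, ← mul_assoc,
    mul_inv_cancel₀ hh.ne', one_mul]

lemma bnd {k : ℝ → ℝ} (hk : Continuous k) {r : ℝ} (hr : 0 < r)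
    (hks : ∀ z, r ≤ |z| → k z = 0) {g : ℝ → ℝ} (hg : Continuous g)
    {C : ℝ} (hC : 0 ≤ C) (hgb : ∀ y, |g y| ≤ C) (x : ℝ) (S : Set ℝ) :
    ‖∫ y in S, k (x - y) * g y‖ ≤ C * ∫ z, |k z| := by
  have hcont : Continuous fun y => k (x - y) * g y :=
    (hk.comp (continuous_const.sub continuous_id)).mul hg
  have hsupp : ∀ y, y ∉ Set.Icc (x - r) (x + r) → k (x - y) * g y = 0 := by
    intro y hy
    rw [Set.mem_Icc, not_and_or, not_le, not_le] at hy
    have : k (x - y) = 0 := by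
      apply hks
      rcases hy with h1 | h1
      · rw [abs_of_pos (by linarith)]; linarith
      · rw [abs_of_neg (by linarith)]; linarith
    rw [this, zero_mul]
  have hki : Integrable (fun y => k (x - y) * g y) :=
    hcont.integrable_of_hasCompactSupport
      (HasCompactSupport.intro isCompact_Icc hsupp)
  have habs : Integrable (fun y => |k (x - y) * g y|) := hki.abs
  have hkc : Integrable (fun y => |k (x - y)| * C) := by
    apply Continuous.integrable_of_hasCompactSupport
    · exact ((hk.comp (continuous_const.sub continuous_id)).abs).mul continuous_const
    · apply HasCompactSupport.intro (isCompact_Icc (a := x - r) (b := x + r))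
      intro y hy
      rw [Set.mem_Icc, not_and_or, not_le, not_le] at hy
      have : k (x - y) = 0 := by
        apply hks
        rcases hy with h1 | h1
        · rw [abs_of_pos (by linarith)]; linarith
        · rw [abs_of_neg (by linarith)]; linarith
      rw [this, abs_zero, zero_mul]
  calc ‖∫ y in S, k (x - y) * g y‖
      ≤ ∫ y in S, |k (x - y) * g y| := norm_integral_le_integral_norm _
    _ ≤ ∫ y, |k (x - y) * g y| :=
        setIntegral_le_integral habs (Filter.Eventually.of_forall (fun y => abs_nonneg _))
    _ ≤ ∫ y, |k (x - y)| * C := by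
        apply integral_mono habs hkc
        intro y
        show |k (x - y) * g y| ≤ |k (x - y)| * C
        rw [abs_mul]
        exact mul_le_mul_of_nonneg_left (hgb y) (abs_nonneg _)
    _ = (∫ y, |k (x - y)|) * C := integral_mul_const _ _
    _ = (∫ z, |k z|) * C := by rw [integral_sub_left_eq_self (fun z => |k z|) volume x]
    _ = C * ∫ z, |k z| := mul_comm _ _

end ReynoldsAux

namespace ReynoldsAux

lemma ker_integrable {k : ℝ → ℝ} (hk : Continuous k) {r : ℝ} (hr : 0 < r)
    (hks : ∀ z, r ≤ |z| → k z = 0) {E : Type*} [NormedAddCommGroup E] [NormedSpace ℝ E]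
    {g : ℝ → E} (hg : Continuous g) (x : ℝ) :
    Integrable (fun y => k (x - y) • g y) := by
  have hc : Continuous fun y : ℝ => k (x - y) • g y :=
    (hk.comp (continuous_const.sub continuous_id)).smul hg
  apply hc.integrable_of_hasCompactSupport
  apply HasCompactSupport.intro (isCompact_Icc (a := x - r) (b := x + r))
  intro y hy
  rw [Set.mem_Icc, not_and_or, not_le, not_le] at hy
  have : k (x - y) = 0 := by
    apply hks
    rcases hy with h1 | h1
    · rw [abs_of_pos (by linarith)]; linarith
    · rw [abs_of_neg (by linarith)]; linarith
  rw [this, zero_smul]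

lemma ker_integrable' {k : ℝ → ℝ} (hk : Continuous k) {r : ℝ} (hr : 0 < r)
    (hks : ∀ z, r ≤ |z| → k z = 0) {g : ℝ → ℝ} (hg : Continuous g) (x : ℝ) :
    Integrable (fun y => k (x - y) * g y) := by
  simpa [smul_eq_mul] using ker_integrable hk hr hks hg x (E := ℝ)

lemma cont_param {k : ℝ → ℝ} (hk : Continuous k) {r Ck : ℝ} (hr : 0 < r)
    (hkb : ∀ z, |k z| ≤ Ck) (hks : ∀ z, r ≤ |z| → k z = 0)
    {Φ : ℝ → ℝ → ℝ} (hΦ : Continuous fun p : ℝ × ℝ => Φ p.1 p.2)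
    {CΦ : ℝ} (hΦb : ∀ x y, |Φ x y| ≤ CΦ) (S : Set ℝ) :
    Continuous fun x => ∫ y in S, k (x - y) * Φ x y := by
  have hCk : 0 ≤ Ck := le_trans (abs_nonneg _) (hkb 0)
  have hCΦ : 0 ≤ CΦ := le_trans (abs_nonneg _) (hΦb 0 0)
  rw [continuous_iff_continuousAt]
  intro x₀
  apply continuousAt_of_dominated
    (bound := (Set.Icc (x₀ - 1 - r) (x₀ + 1 + r)).indicator (fun _ => Ck * CΦ))
  · apply Filter.Eventually.of_forall
    intro x
    exact ((hk.comp (continuous_const.sub continuous_id)).mul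
      (hΦ.comp (Continuous.prodMk_right x))).aestronglyMeasurable.restrict
  · filter_upwards [Metric.ball_mem_nhds x₀ one_pos] with x hx
    apply Filter.Eventually.of_forall
    intro y
    rw [Metric.mem_ball, Real.dist_eq] at hx
    have hx1 : -1 < x - x₀ := by cases abs_lt.mp hx; linarith
    have hx2 : x - x₀ < 1 := by cases abs_lt.mp hx; linarith
    by_cases hy : y ∈ Set.Icc (x₀ - 1 - r) (x₀ + 1 + r)
    · rw [Set.indicator_of_mem hy]
      show |k (x - y) * Φ x y| ≤ Ck * CΦ
      rw [abs_mul]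
      exact mul_le_mul (hkb _) (hΦb _ _) (abs_nonneg _) hCk
    · rw [Set.indicator_of_notMem hy]
      have hk0 : k (x - y) = 0 := by
        rw [Set.mem_Icc, not_and_or, not_le, not_le] at hy
        apply hks
        rcases hy with h1 | h1
        · rw [abs_of_pos (by linarith)]; linarith
        · rw [abs_of_neg (by linarith)]; linarith
      show |k (x - y) * Φ x y| ≤ 0
      rw [hk0, zero_mul, abs_zero]
  · rw [integrable_indicator_iff measurableSet_Icc]
    apply (integrableOn_const_iff enorm_ne_top).mpr
    right
    rw [Measure.restrict_apply measurableSet_Icc]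
    exact lt_of_le_of_lt (measure_mono Set.inter_subset_left) measure_Icc_lt_top
  · apply Filter.Eventually.of_forall
    intro y
    exact ((hk.comp ((continuous_id.sub continuous_const))).mul
      (hΦ.comp (continuous_id.prodMk continuous_const))).continuousAt

end ReynoldsAux

namespace ReynoldsAux

lemma halfB {j : ℝ → ℝ} (hj : ContDiff ℝ (⊤ : ℕ∞) j) (hjeven : ∀ x, j (-x) = j x)
    (hjnn : ∀ x, 0 ≤ j x) (hjsupp : Function.support j ⊆ Set.Ioo (-1 : ℝ) 1)
    (hjint : ∫ x, j x = 1)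
    {W : ℝ → ℝ → ℝ} (hW : Continuous fun p : ℝ × ℝ => W p.1 p.2)
    {CW : ℝ} (hWb : ∀ x y, |W x y| ≤ CW) :
    Tendsto (fun h : ℝ => ∫ x in Iic (0:ℝ),
        ∫ y in Ioi (0:ℝ), deriv j (x - y) * W (h * x) (h * y))
      (nhdsWithin 0 (Set.Ioi 0)) (nhds (W 0 0 / 2)) := by
  have hjdc : Continuous (deriv j) := hj.continuous_deriv (by simp)
  have hjdz : ∀ z, (1:ℝ) ≤ |z| → deriv j z = 0 := fun z hz => jd_supp hjnn hjsupp hz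
  have hds : Function.support (deriv j) ⊆ Set.Ioo (-1 : ℝ) 1 := by
    intro z hz
    by_contra hzn
    have h1 : ¬ |z| < 1 := fun hlt => hzn (Set.mem_Ioo.mpr (abs_lt.mp hlt))
    exact hz (hjdz z (not_lt.mp h1))
  obtain ⟨Cd, hCd0, hCdb⟩ := exists_bound hjdc hds
  have hCW : 0 ≤ CW := le_trans (abs_nonneg _) (hWb 0 0)
  set CJ1 : ℝ := ∫ z, |deriv j z| with hCJ1
  have heq : ∫ x in Iic (0:ℝ), W 0 0 * j x = W 0 0 / 2 := by
    rw [integral_const_mul, j_half_Iic hj hjeven hjsupp hjint]; ring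
  rw [← heq]
  apply tendsto_integral_filter_of_dominated_convergence
    (bound := (Set.Ioc (-1:ℝ) 0).indicator (fun _ => CW * CJ1))
  · -- measurability
    apply Filter.Eventually.of_forall
    intro h
    apply Continuous.aestronglyMeasurable ?_ |>.restrict
    apply cont_param hjdc one_pos hCdb hjdz
      (Φ := fun x y => W (h * x) (h * y)) ?_ (CΦ := CW) (fun x y => hWb _ _)
    exact hW.comp (((continuous_const.mul continuous_fst)).prodMk
      ((continuous_const.mul continuous_snd)))
  · -- bound
    apply Filter.Eventually.of_forall
    intro h
    filter_upwards [ae_restrict_mem measurableSet_Iic] with x hxI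
    by_cases hx : x ∈ Set.Ioc (-1:ℝ) 0
    · rw [Set.indicator_of_mem hx]
      exact bnd hjdc one_pos hjdz
        (hW.comp ((continuous_const.mul continuous_const).prodMk
          (continuous_const.mul continuous_id))) hCW (fun y => hWb _ _) x (Ioi 0)
    · rw [Set.indicator_of_notMem hx]
      have hxI' : x ≤ 0 := hxI
      have hxm : x ≤ -1 := by
        rw [Set.mem_Ioc, not_and_or, not_lt, not_le] at hx
        rcases hx with h1 | h1
        · linarith
        · linarith
      have hz : ∀ y ∈ Ioi (0:ℝ), deriv j (x - y) * W (h * x) (h * y) = 0 := by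
        intro y hy
        rw [Set.mem_Ioi] at hy
        have : deriv j (x - y) = 0 := by
          apply hjdz
          rw [abs_of_neg (by linarith)]; linarith
        rw [this, zero_mul]
      rw [setIntegral_congr_fun measurableSet_Ioi hz, integral_zero, norm_zero]
  · -- bound integrable
    rw [integrable_indicator_iff measurableSet_Ioc]
    apply (integrableOn_const_iff enorm_ne_top).mpr
    right
    rw [Measure.restrict_apply measurableSet_Ioc]
    exact lt_of_le_of_lt (measure_mono Set.inter_subset_left) measure_Ioc_lt_top
  · -- pointwise limit
    apply Filter.Eventually.of_forall
    intro x
    have hlim : Tendsto (fun h : ℝ => ∫ y in Ioi (0:ℝ),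
        deriv j (x - y) * W (h * x) (h * y)) (nhdsWithin 0 (Set.Ioi 0))
        (nhds (∫ y in Ioi (0:ℝ), deriv j (x - y) * W 0 0)) := by
      apply tendsto_integral_filter_of_dominated_convergence
        (bound := fun y => |deriv j (x - y)| * CW)
      · apply Filter.Eventually.of_forall
        intro h
        exact ((hjdc.comp (continuous_const.sub continuous_id)).mul
          (hW.comp ((continuous_const.mul continuous_const).prodMk
            (continuous_const.mul continuous_id)))).aestronglyMeasurable.restrict
      · apply Filter.Eventually.of_forall
        intro h
        apply Filter.Eventually.of_forall
        intro y
        show |deriv j (x - y) * W (h * x) (h * y)| ≤ |deriv j (x - y)| * CW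
        rw [abs_mul]
        exact mul_le_mul_of_nonneg_left (hWb _ _) (abs_nonneg _)
      · apply Integrable.integrableOn
        have : Continuous fun z : ℝ => |deriv j z| := continuous_abs.comp hjdc
        have hzz : ∀ z : ℝ, (1:ℝ) ≤ |z| → |deriv j z| = 0 := by
          intro z hz; rw [hjdz z hz, abs_zero]
        simpa [smul_eq_mul] using
          ker_integrable' this one_pos hzz (continuous_const : Continuous fun _ : ℝ => CW) x
      · apply Filter.Eventually.of_forall
        intro y
        apply Tendsto.mul tendsto_const_nhds
        have hc2 : Continuous (fun h : ℝ => ((h * x, h * y) : ℝ × ℝ)) :=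
          (continuous_id.mul continuous_const).prodMk (continuous_id.mul continuous_const)
        have h1 : Tendsto (fun h : ℝ => ((h * x, h * y) : ℝ × ℝ)) (nhds 0) (nhds ((0:ℝ), (0:ℝ))) := by
          have h2 := hc2.tendsto (0:ℝ)
          simpa using h2
        exact ((hW.tendsto ((0:ℝ), (0:ℝ))).comp h1).mono_left nhdsWithin_le_nhds
    have : ∫ y in Ioi (0:ℝ), deriv j (x - y) * W 0 0 = W 0 0 * j x := by
      rw [integral_mul_const, inner_Ioi hj hjnn hjsupp x, mul_comm]
    rwa [this] at hlim

end ReynoldsAux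

namespace ReynoldsAux

lemma key {j : ℝ → ℝ} (hj : ContDiff ℝ (⊤ : ℕ∞) j) (hjeven : ∀ x, j (-x) = j x)
    (hjnn : ∀ x, 0 ≤ j x) (hjsupp : Function.support j ⊆ Set.Ioo (-1 : ℝ) 1)
    (hjint : ∫ x, j x = 1)
    {F : ℝ → ℝ → ℝ} (hF : Continuous fun p : ℝ × ℝ => F p.1 p.2)
    {CF : ℝ} (hFb : ∀ x y, |F x y| ≤ CF) (hFs : ∀ x y, F x y = F y x)
    {a b : ℝ} (hab : a < b) :
    Tendsto (fun h : ℝ => ∫ τ in Ioc a b, ∫ σ,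
        (h⁻¹ * h⁻¹ * deriv j ((τ - σ) / h)) * F τ σ)
      (nhdsWithin 0 (Set.Ioi 0)) (nhds ((F b b - F a a) / 2)) := by
  have hjdc : Continuous (deriv j) := hj.continuous_deriv (by simp)
  have hjdz : ∀ z, (1:ℝ) ≤ |z| → deriv j z = 0 := fun z hz => jd_supp hjnn hjsupp hz
  have hds : Function.support (deriv j) ⊆ Set.Ioo (-1 : ℝ) 1 := by
    intro z hz
    by_contra hzn
    have h1 : ¬ |z| < 1 := fun hlt => hzn (Set.mem_Ioo.mpr (abs_lt.mp hlt))
    exact hz (hjdz z (not_lt.mp h1))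
  obtain ⟨Cd, hCd0, hCdb⟩ := exists_bound hjdc hds
  have hCF : 0 ≤ CF := le_trans (abs_nonneg _) (hFb 0 0)
  -- the two boundary weights
  set Wa : ℝ → ℝ → ℝ := fun x y => F (a - x) (a - y) with hWa
  set Wb : ℝ → ℝ → ℝ := fun x y => F (b + x) (b + y) with hWb
  have hWac : Continuous fun p : ℝ × ℝ => Wa p.1 p.2 :=
    hF.comp ((continuous_const.sub continuous_fst).prodMk (continuous_const.sub continuous_snd))
  have hWbc : Continuous fun p : ℝ × ℝ => Wb p.1 p.2 :=
    hF.comp ((continuous_const.add continuous_fst).prodMk (continuous_const.add continuous_snd))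
  have hWab : ∀ x y, |Wa x y| ≤ CF := fun x y => hFb _ _
  have hWbb : ∀ x y, |Wb x y| ≤ CF := fun x y => hFb _ _
  have hA := halfB hj hjeven hjnn hjsupp hjint hWac hWab
  have hB := halfB hj hjeven hjnn hjsupp hjint hWbc hWbb
  have hval : (F b b - F a a) / 2 = Wb 0 0 / 2 - Wa 0 0 / 2 := by
    simp only [hWa, hWb, add_zero, sub_zero]
    ring
  rw [hval]
  apply Tendsto.congr' ?_ (hB.sub hA)
  -- the eventual identity
  filter_upwards [Ioo_mem_nhdsGT_of_mem (Set.left_mem_Ico.mpr (sub_pos.mpr hab))] with h hh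
  obtain ⟨hh0, hhb⟩ := hh
  have hh0' : h ≠ 0 := ne_of_gt hh0
  set k : ℝ → ℝ := fun z => h⁻¹ * h⁻¹ * deriv j (z / h) with hkdef
  have hk : Continuous k := continuous_const.mul (hjdc.comp (continuous_id.div_const h))
  have hkz : ∀ z, h ≤ |z| → k z = 0 := by
    intro z hz
    have : (1:ℝ) ≤ |z / h| := by
      rw [abs_div, abs_of_pos hh0, le_div_iff₀ hh0, one_mul]
      exact hz
    simp only [hkdef, hjdz _ this, mul_zero]
  have hkb : ∀ z, |k z| ≤ h⁻¹ * h⁻¹ * Cd := by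
    intro z
    have h1 : |k z| = h⁻¹ * h⁻¹ * |deriv j (z / h)| := by
      simp only [hkdef, abs_mul, abs_of_pos (inv_pos.mpr hh0)]
    rw [h1]
    exact mul_le_mul_of_nonneg_left (hCdb _) (by positivity)
  have hGint : ∀ τ, Integrable (fun σ => k (τ - σ) * F τ σ) :=
    fun τ => ker_integrable' hk hh0 hkz (hF.comp (Continuous.prodMk_right τ)) τ
  -- pointwise splitting of the inner integral
  have hsplitτ : ∀ τ, (∫ σ, k (τ - σ) * F τ σ) =
      (∫ σ in Iic a, k (τ - σ) * F τ σ) + (∫ σ in Ioc a b, k (τ - σ) * F τ σ)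
       + ∫ σ in Ioi b, k (τ - σ) * F τ σ := by
    intro τ
    have h1 : (∫ σ in Iic b, k (τ - σ) * F τ σ) + ∫ σ in (Iic b)ᶜ, k (τ - σ) * F τ σ
        = ∫ σ, k (τ - σ) * F τ σ := integral_add_compl measurableSet_Iic (hGint τ)
    rw [Set.compl_Iic] at h1
    have h2 : ∫ σ in Iic b, k (τ - σ) * F τ σ =
        (∫ σ in Iic a, k (τ - σ) * F τ σ) + ∫ σ in Ioc a b, k (τ - σ) * F τ σ := by
      rw [← Set.Iic_union_Ioc_eq_Iic hab.le]
      exact setIntegral_union (Set.Iic_disjoint_Ioc le_rfl) measurableSet_Ioc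
        (hGint τ).integrableOn (hGint τ).integrableOn
    linarith
  haveI hfin : IsFiniteMeasure (volume.restrict (Ioc a b)) :=
    ⟨by rw [Measure.restrict_apply_univ]; exact measure_Ioc_lt_top⟩
  -- continuity and boundedness of the three partial maps
  have hcP : Continuous fun τ => ∫ σ in Iic a, k (τ - σ) * F τ σ :=
    cont_param hk hh0 hkb hkz hF hFb (Iic a)
  have hcQ : Continuous fun τ => ∫ σ in Ioc a b, k (τ - σ) * F τ σ :=
    cont_param hk hh0 hkb hkz hF hFb (Ioc a b)
  have hcR : Continuous fun τ => ∫ σ in Ioi b, k (τ - σ) * F τ σ :=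
    cont_param hk hh0 hkb hkz hF hFb (Ioi b)
  have hbnd : ∀ (τ : ℝ) (S : Set ℝ), ‖∫ σ in S, k (τ - σ) * F τ σ‖ ≤ CF * ∫ z, |k z| :=
    fun τ S => bnd hk hh0 hkz (hF.comp (Continuous.prodMk_right τ)) hCF (hFb τ) τ S
  have hPint : IntegrableOn (fun τ => ∫ σ in Iic a, k (τ - σ) * F τ σ) (Ioc a b) :=
    Integrable.mono' (integrable_const (CF * ∫ z, |k z|))
      hcP.aestronglyMeasurable.restrict
      (Filter.Eventually.of_forall (fun τ => hbnd τ _))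
  have hQint : IntegrableOn (fun τ => ∫ σ in Ioc a b, k (τ - σ) * F τ σ) (Ioc a b) :=
    Integrable.mono' (integrable_const (CF * ∫ z, |k z|))
      hcQ.aestronglyMeasurable.restrict
      (Filter.Eventually.of_forall (fun τ => hbnd τ _))
  have hRint : IntegrableOn (fun τ => ∫ σ in Ioi b, k (τ - σ) * F τ σ) (Ioc a b) :=
    Integrable.mono' (integrable_const (CF * ∫ z, |k z|))
      hcR.aestronglyMeasurable.restrict
      (Filter.Eventually.of_forall (fun τ => hbnd τ _))
  -- split the double integral
  have hsplit : (∫ τ in Ioc a b, ∫ σ, k (τ - σ) * F τ σ) =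
      (∫ τ in Ioc a b, ∫ σ in Iic a, k (τ - σ) * F τ σ)
      + (∫ τ in Ioc a b, ∫ σ in Ioc a b, k (τ - σ) * F τ σ)
      + ∫ τ in Ioc a b, ∫ σ in Ioi b, k (τ - σ) * F τ σ := by
    rw [setIntegral_congr_fun measurableSet_Ioc (fun τ _ => hsplitτ τ)]
    have hPQint : IntegrableOn (fun τ => (∫ σ in Iic a, k (τ - σ) * F τ σ)
        + ∫ σ in Ioc a b, k (τ - σ) * F τ σ) (Ioc a b) := hPint.add hQint
    exact (integral_add hPQint hRint).trans
      (congrArg (· + ∫ τ in Ioc a b, ∫ σ in Ioi b, k (τ - σ) * F τ σ)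
        (integral_add hPint hQint))
  -- middle term vanishes by antisymmetry
  have hanti : ∀ τ σ, k (τ - σ) * F τ σ = -(k (σ - τ) * F σ τ) := by
    intro τ σ
    have h1 : deriv j ((τ - σ) / h) = -deriv j ((σ - τ) / h) := by
      have h2 : (σ - τ) / h = -((τ - σ) / h) := by ring
      rw [h2, jd_odd hj hjeven, neg_neg]
    simp only [hkdef, h1, hFs τ σ]
    ring
  have hQzero : (∫ τ in Ioc a b, ∫ σ in Ioc a b, k (τ - σ) * F τ σ) = 0 := by
    have hprodint : Integrable (Function.uncurry fun τ σ => k (τ - σ) * F τ σ)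
        ((volume.restrict (Ioc a b)).prod (volume.restrict (Ioc a b))) := by
      apply Integrable.mono' (integrable_const ((h⁻¹ * h⁻¹ * Cd) * CF))
      · exact ((hk.comp (continuous_fst.sub continuous_snd)).mul hF).aestronglyMeasurable
      · apply Filter.Eventually.of_forall
        intro p
        show ‖k (p.1 - p.2) * F p.1 p.2‖ ≤ _
        rw [Real.norm_eq_abs]
        rw [abs_mul]
        apply mul_le_mul (hkb _) (hFb _ _) (abs_nonneg _)
        positivity
    have hswap := integral_integral_swap hprodint
    have e1 : (fun σ => ∫ τ in Ioc a b, k (τ - σ) * F τ σ)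
        = fun σ => - ∫ τ in Ioc a b, k (σ - τ) * F σ τ := by
      funext σ
      have : (fun τ => k (τ - σ) * F τ σ) = fun τ => -(k (σ - τ) * F σ τ) :=
        funext (fun τ => hanti τ σ)
      rw [this, integral_neg]
    rw [e1, integral_neg] at hswap
    linarith
  -- change of variables for the boundary terms
  have hjd_eq : ∀ x y : ℝ, k (a + h * x - (a + h * y)) = h⁻¹ * h⁻¹ * deriv j (x - y) := by
    intro x y
    simp only [hkdef]
    congr 2
    field_simp
    ring
  have hjd_eq' : ∀ x y : ℝ, k (b + h * x - (b + h * y)) = h⁻¹ * h⁻¹ * deriv j (x - y) := by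
    intro x y
    simp only [hkdef]
    congr 2
    field_simp
    ring
  -- the b-side boundary term
  have hReq : (∫ τ in Ioc a b, ∫ σ in Ioi b, k (τ - σ) * F τ σ)
      = ∫ x in Iic (0:ℝ), ∫ y in Ioi (0:ℝ), deriv j (x - y) * Wb (h * x) (h * y) := by
    set d : ℝ := (a - b) / h with hddef
    have hd : d < -1 := by
      rw [hddef, div_lt_iff₀ hh0]; linarith
    have hd0 : d ≤ 0 := by linarith
    set B : ℝ → ℝ := fun x => ∫ y in Ioi (0:ℝ), deriv j (x - y) * Wb (h * x) (h * y) with hBdef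
    have hWbrw : ∀ x y : ℝ, Wb (h * x) (h * y) = F (b + h * x) (b + h * y) := fun x y => rfl
    have hstep1 : ∀ τ, (∫ σ in Ioi b, k (τ - σ) * F τ σ)
        = h * ∫ y in Ioi (0:ℝ), k (τ - (b + h * y)) * F τ (b + h * y) := by
      intro τ
      apply scale_set hh0 measurableSet_Ioi measurableSet_Ioi
      intro y
      simp only [Set.mem_Ioi, lt_add_iff_pos_right]
      constructor
      · intro hy; nlinarith
      · intro hy; exact mul_pos hh0 hy
    have hstep2 : (∫ τ in Ioc a b, h * ∫ y in Ioi (0:ℝ), k (τ - (b + h * y)) * F τ (b + h * y))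
        = h * ∫ x in Ioc d 0, h * ∫ y in Ioi (0:ℝ),
            k (b + h * x - (b + h * y)) * F (b + h * x) (b + h * y) := by
      apply scale_set hh0 measurableSet_Ioc measurableSet_Ioc
      intro x
      simp only [Set.mem_Ioc]
      constructor
      · rintro ⟨h1, h2⟩
        constructor
        · rw [hddef, div_lt_iff₀ hh0]; nlinarith
        · nlinarith
      · rintro ⟨h1, h2⟩
        rw [hddef, div_lt_iff₀ hh0] at h1
        constructor <;> nlinarith
    have hinner : ∀ x : ℝ, (∫ y in Ioi (0:ℝ), k (b + h * x - (b + h * y)) * F (b + h * x) (b + h * y))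
        = h⁻¹ * h⁻¹ * B x := by
      intro x
      rw [hBdef]
      simp only
      rw [← integral_const_mul]
      apply setIntegral_congr_fun measurableSet_Ioi
      intro y _
      beta_reduce
      rw [hjd_eq' x y, hWbrw x y]
      ring
    have hcollapse : (∫ τ in Ioc a b, ∫ σ in Ioi b, k (τ - σ) * F τ σ) = ∫ x in Ioc d 0, B x := by
      rw [setIntegral_congr_fun measurableSet_Ioc (fun τ _ => hstep1 τ), hstep2]
      have e1 : ∀ x : ℝ, h * ∫ y in Ioi (0:ℝ),
          k (b + h * x - (b + h * y)) * F (b + h * x) (b + h * y) = h⁻¹ * B x := by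
        intro x
        rw [hinner x, ← mul_assoc, ← mul_assoc, mul_inv_cancel₀ hh0', one_mul]
      rw [setIntegral_congr_fun measurableSet_Ioc (fun x _ => e1 x), integral_const_mul,
        ← mul_assoc, mul_inv_cancel₀ hh0', one_mul]
    rw [hcollapse]
    -- extend the domain from `Ioc d 0` to `Iic 0`
    have hBzero : ∀ x ∈ Iic d, B x = 0 := by
      intro x hx
      rw [hBdef]
      simp only
      rw [setIntegral_congr_fun measurableSet_Ioi (g := fun _ => (0:ℝ)), integral_zero]
      intro y hy
      rw [Set.mem_Ioi] at hy
      rw [Set.mem_Iic] at hx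
      have : deriv j (x - y) = 0 := by
        apply hjdz
        rw [abs_of_neg (by linarith)]; linarith
      beta_reduce
      rw [this, zero_mul]
    have hBcont : Continuous B := by
      rw [hBdef]
      apply cont_param hjdc one_pos hCdb hjdz
        (Φ := fun x y => Wb (h * x) (h * y)) ?_ (CΦ := CF) (fun x y => hFb _ _) (Ioi 0)
      exact hWbc.comp ((continuous_const.mul continuous_fst).prodMk
        (continuous_const.mul continuous_snd))
    have hint1 : IntegrableOn B (Iic d) := by
      apply (integrableOn_congr_fun hBzero measurableSet_Iic).mpr
      exact integrableOn_zero
    haveI hfin2 : IsFiniteMeasure (volume.restrict (Ioc d 0)) :=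
      ⟨by rw [Measure.restrict_apply_univ]; exact measure_Ioc_lt_top⟩
    have hint2 : IntegrableOn B (Ioc d 0) := by
      apply Integrable.mono' (integrable_const (CF * ∫ z, |deriv j z|))
        hBcont.aestronglyMeasurable.restrict
      apply Filter.Eventually.of_forall
      intro x
      rw [hBdef]
      exact bnd hjdc one_pos hjdz
        (hWbc.comp ((continuous_const.mul continuous_const).prodMk
          (continuous_const.mul continuous_id))) hCF (fun y => hFb _ _) x (Ioi 0)
    have hsplitB : ∫ x in Iic (0:ℝ), B x = (∫ x in Iic d, B x) + ∫ x in Ioc d 0, B x := by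
      rw [← Set.Iic_union_Ioc_eq_Iic hd0]
      exact setIntegral_union (Set.Iic_disjoint_Ioc le_rfl) measurableSet_Ioc hint1 hint2
    have hzint : ∫ x in Iic d, B x = 0 := by
      rw [setIntegral_congr_fun measurableSet_Iic hBzero, integral_zero]
    rw [hsplitB, hzint, zero_add]
  -- the a-side boundary term
  have hPeq : (∫ τ in Ioc a b, ∫ σ in Iic a, k (τ - σ) * F τ σ)
      = -∫ x in Iic (0:ℝ), ∫ y in Ioi (0:ℝ), deriv j (x - y) * Wa (h * x) (h * y) := by
    set d : ℝ := (b - a) / h with hddef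
    have hd : 1 < d := by
      rw [hddef, lt_div_iff₀ hh0]; linarith
    have hd0 : (0:ℝ) ≤ d := by linarith
    set A : ℝ → ℝ := fun x => ∫ y in Iic (0:ℝ), deriv j (x - y) * F (a + h * x) (a + h * y)
      with hAdef
    have hstep1 : ∀ τ, (∫ σ in Iic a, k (τ - σ) * F τ σ)
        = h * ∫ y in Iic (0:ℝ), k (τ - (a + h * y)) * F τ (a + h * y) := by
      intro τ
      apply scale_set hh0 measurableSet_Iic measurableSet_Iic
      intro y
      simp only [Set.mem_Iic, add_le_iff_nonpos_right]
      constructor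
      · intro hy; nlinarith
      · intro hy; exact mul_nonpos_of_nonneg_of_nonpos hh0.le hy
    have hstep2 : (∫ τ in Ioc a b, h * ∫ y in Iic (0:ℝ), k (τ - (a + h * y)) * F τ (a + h * y))
        = h * ∫ x in Ioc 0 d, h * ∫ y in Iic (0:ℝ),
            k (a + h * x - (a + h * y)) * F (a + h * x) (a + h * y) := by
      apply scale_set hh0 measurableSet_Ioc measurableSet_Ioc
      intro x
      simp only [Set.mem_Ioc, lt_add_iff_pos_right]
      constructor
      · rintro ⟨h1, h2⟩
        constructor
        · nlinarith
        · rw [hddef, le_div_iff₀ hh0]; nlinarith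
      · rintro ⟨h1, h2⟩
        rw [hddef, le_div_iff₀ hh0] at h2
        constructor
        · exact mul_pos hh0 h1
        · nlinarith
    have hinner : ∀ x : ℝ, (∫ y in Iic (0:ℝ), k (a + h * x - (a + h * y)) * F (a + h * x) (a + h * y))
        = h⁻¹ * h⁻¹ * A x := by
      intro x
      rw [hAdef]
      simp only
      rw [← integral_const_mul]
      apply setIntegral_congr_fun measurableSet_Iic
      intro y _
      beta_reduce
      rw [hjd_eq x y]
      ring
    have hcollapse : (∫ τ in Ioc a b, ∫ σ in Iic a, k (τ - σ) * F τ σ) = ∫ x in Ioc 0 d, A x := by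
      rw [setIntegral_congr_fun measurableSet_Ioc (fun τ _ => hstep1 τ), hstep2]
      have e1 : ∀ x : ℝ, h * ∫ y in Iic (0:ℝ),
          k (a + h * x - (a + h * y)) * F (a + h * x) (a + h * y) = h⁻¹ * A x := by
        intro x
        rw [hinner x, ← mul_assoc, ← mul_assoc, mul_inv_cancel₀ hh0', one_mul]
      rw [setIntegral_congr_fun measurableSet_Ioc (fun x _ => e1 x), integral_const_mul,
        ← mul_assoc, mul_inv_cancel₀ hh0', one_mul]
    rw [hcollapse]
    -- extend the domain from `Ioc 0 d` to `Ioi 0`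
    have hAzero : ∀ x ∈ Ioi d, A x = 0 := by
      intro x hx
      rw [hAdef]
      simp only
      rw [setIntegral_congr_fun measurableSet_Iic (g := fun _ => (0:ℝ)), integral_zero]
      intro y hy
      rw [Set.mem_Iic] at hy
      rw [Set.mem_Ioi] at hx
      have : deriv j (x - y) = 0 := by
        apply hjdz
        rw [abs_of_pos (by linarith)]; linarith
      beta_reduce
      rw [this, zero_mul]
    have hAcont : Continuous A := by
      rw [hAdef]
      apply cont_param hjdc one_pos hCdb hjdz
        (Φ := fun x y => F (a + h * x) (a + h * y)) ?_ (CΦ := CF) (fun x y => hFb _ _) (Iic 0)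
      exact hF.comp ((continuous_const.add (continuous_const.mul continuous_fst)).prodMk
        (continuous_const.add (continuous_const.mul continuous_snd)))
    have hint1 : IntegrableOn A (Ioi d) := by
      apply (integrableOn_congr_fun hAzero measurableSet_Ioi).mpr
      exact integrableOn_zero
    haveI hfin2 : IsFiniteMeasure (volume.restrict (Ioc (0:ℝ) d)) :=
      ⟨by rw [Measure.restrict_apply_univ]; exact measure_Ioc_lt_top⟩
    have hint2 : IntegrableOn A (Ioc 0 d) := by
      apply Integrable.mono' (integrable_const (CF * ∫ z, |deriv j z|))
        hAcont.aestronglyMeasurable.restrict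
      apply Filter.Eventually.of_forall
      intro x
      rw [hAdef]
      exact bnd hjdc one_pos hjdz
        (hF.comp ((continuous_const.prodMk
          (continuous_const.add (continuous_const.mul continuous_id))))) hCF
        (fun y => hFb _ _) x (Iic 0)
    have hsplitA : ∫ x in Ioi (0:ℝ), A x = (∫ x in Ioc 0 d, A x) + ∫ x in Ioi d, A x := by
      rw [← Ioc_union_Ioi_eq_Ioi hd0]
      exact setIntegral_union Ioc_disjoint_Ioi_same measurableSet_Ioi hint2 hint1
    have hzint : ∫ x in Ioi d, A x = 0 := by
      rw [setIntegral_congr_fun measurableSet_Ioi hAzero, integral_zero]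
    have hIoc : ∫ x in Ioc 0 d, A x = ∫ x in Ioi (0:ℝ), A x := by
      rw [hsplitA, hzint, add_zero]
    rw [hIoc]
    -- now reflect
    have hrefl1 : ∫ x in Iic (0:ℝ), A (-x) = ∫ x in Ioi (-(0:ℝ)), A x :=
      integral_comp_neg_Iic 0 A
    rw [neg_zero] at hrefl1
    rw [← hrefl1]
    rw [← integral_neg]
    apply setIntegral_congr_fun measurableSet_Iic
    intro x _
    show A (-x) = -∫ y in Ioi (0:ℝ), deriv j (x - y) * Wa (h * x) (h * y)
    rw [hAdef]
    simp only
    have hrefl2 : ∫ y in Ioi (0:ℝ), deriv j (-x - -y) * F (a + h * -x) (a + h * -y)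
        = ∫ y in Iic (-(0:ℝ)), deriv j (-x - y) * F (a + h * -x) (a + h * y) :=
      integral_comp_neg_Ioi 0 (fun y => deriv j (-x - y) * F (a + h * -x) (a + h * y))
    rw [neg_zero] at hrefl2
    rw [← hrefl2, ← integral_neg]
    apply setIntegral_congr_fun measurableSet_Ioi
    intro y _
    have e1 : deriv j (-x - -y) = -deriv j (x - y) := by
      have e2 : -x - -y = -(x - y) := by ring
      rw [e2, jd_odd hj hjeven]
    have e3 : a + h * -x = a - h * x := by ring
    have e4 : a + h * -y = a - h * y := by ring
    beta_reduce
    rw [e1, e3, e4]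
    show -deriv j (x - y) * F (a - h * x) (a - h * y)
        = -(deriv j (x - y) * Wa (h * x) (h * y))
    rw [hWa]
    ring
  -- put everything together
  show _ = ∫ τ in Ioc a b, ∫ σ, k (τ - σ) * F τ σ
  rw [hsplit, hQzero, hPeq, hReq]
  ring

end ReynoldsAux

namespace ReynoldsAux

lemma moll_hasDerivAt {H : Type*} [NormedAddCommGroup H] [NormedSpace ℝ H]
    {j : ℝ → ℝ} (hj : ContDiff ℝ (⊤ : ℕ∞) j) (hjnn : ∀ x, 0 ≤ j x)
    (hjsupp : Function.support j ⊆ Set.Ioo (-1 : ℝ) 1)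
    {w : ℝ → H} (hw : Continuous w) {Mw : ℝ} (hwb : ∀ t, ‖w t‖ ≤ Mw)
    {h : ℝ} (hh : 0 < h) (τ : ℝ) :
    HasDerivAt (fun σ => ∫ s, (h⁻¹ * j ((σ - s) / h)) • w s)
      (∫ s, (h⁻¹ * h⁻¹ * deriv j ((τ - s) / h)) • w s) τ := by
  have hjdc : Continuous (deriv j) := hj.continuous_deriv (by simp)
  have hjdz : ∀ z, (1:ℝ) ≤ |z| → deriv j z = 0 := fun z hz => jd_supp hjnn hjsupp hz
  have hds : Function.support (deriv j) ⊆ Set.Ioo (-1 : ℝ) 1 := by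
    intro z hz
    by_contra hzn
    have h1 : ¬ |z| < 1 := fun hlt => hzn (Set.mem_Ioo.mpr (abs_lt.mp hlt))
    exact hz (hjdz z (not_lt.mp h1))
  obtain ⟨Cd, hCd0, hCdb⟩ := exists_bound hjdc hds
  have hMw : 0 ≤ Mw := le_trans (norm_nonneg _) (hwb 0)
  have hinv : (0:ℝ) < h⁻¹ := inv_pos.mpr hh
  have key := hasDerivAt_integral_of_dominated_loc_of_deriv_le (μ := volume)
    (F := fun σ s => (h⁻¹ * j ((σ - s) / h)) • w s)
    (F' := fun σ s => (h⁻¹ * h⁻¹ * deriv j ((σ - s) / h)) • w s)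
    (x₀ := τ)
    (bound := (Set.Icc (τ - 1 - h) (τ + 1 + h)).indicator (fun _ => h⁻¹ * h⁻¹ * Cd * Mw))
    (Metric.ball_mem_nhds τ one_pos) ?_ ?_ ?_ ?_ ?_ ?_
  · exact key.2
  · -- measurability of F
    apply Filter.Eventually.of_forall
    intro σ
    exact ((continuous_const.mul (hj.continuous.comp
      ((continuous_const.sub continuous_id).div_const h))).smul hw).aestronglyMeasurable
  · -- integrability of F τ
    have hk1 : Continuous fun z : ℝ => h⁻¹ * j (z / h) :=
      continuous_const.mul (hj.continuous.comp (continuous_id.div_const h))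
    have hk1z : ∀ z, h ≤ |z| → h⁻¹ * j (z / h) = 0 := by
      intro z hz
      have : (1:ℝ) ≤ |z / h| := by
        rw [abs_div, abs_of_pos hh, le_div_iff₀ hh, one_mul]; exact hz
      rw [j_zero hjsupp this, mul_zero]
    exact ker_integrable hk1 hh hk1z hw τ
  · -- measurability of F' τ
    exact ((continuous_const.mul (hjdc.comp
      ((continuous_const.sub continuous_id).div_const h))).smul hw).aestronglyMeasurable
  · -- bound on F'
    apply Filter.Eventually.of_forall
    intro s
    intro σ hσ
    rw [Metric.mem_ball, Real.dist_eq] at hσ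
    have hσ1 : -1 < σ - τ := by cases abs_lt.mp hσ; linarith
    have hσ2 : σ - τ < 1 := by cases abs_lt.mp hσ; linarith
    by_cases hs : s ∈ Set.Icc (τ - 1 - h) (τ + 1 + h)
    · rw [Set.indicator_of_mem hs]
      show ‖(h⁻¹ * h⁻¹ * deriv j ((σ - s) / h)) • w s‖ ≤ h⁻¹ * h⁻¹ * Cd * Mw
      rw [norm_smul, Real.norm_eq_abs]
      have e1 : |h⁻¹ * h⁻¹ * deriv j ((σ - s) / h)| ≤ h⁻¹ * h⁻¹ * Cd := by
        rw [abs_mul, abs_mul, abs_of_pos hinv, mul_assoc, mul_assoc]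
        apply mul_le_mul_of_nonneg_left ?_ hinv.le
        exact mul_le_mul_of_nonneg_left (hCdb _) hinv.le
      calc |h⁻¹ * h⁻¹ * deriv j ((σ - s) / h)| * ‖w s‖
          ≤ (h⁻¹ * h⁻¹ * Cd) * Mw :=
            mul_le_mul e1 (hwb s) (norm_nonneg _) (by positivity)
        _ = h⁻¹ * h⁻¹ * Cd * Mw := by ring
    · rw [Set.indicator_of_notMem hs]
      show ‖(h⁻¹ * h⁻¹ * deriv j ((σ - s) / h)) • w s‖ ≤ 0
      have hz : deriv j ((σ - s) / h) = 0 := by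
        apply hjdz
        rw [Set.mem_Icc, not_and_or, not_le, not_le] at hs
        rw [abs_div, abs_of_pos hh, le_div_iff₀ hh, one_mul]
        rcases hs with h1 | h1
        · rw [abs_of_pos (by linarith)]; linarith
        · rw [abs_of_neg (by linarith)]; linarith
      rw [hz, mul_zero, zero_smul, norm_zero]
  · -- integrability of bound
    rw [integrable_indicator_iff measurableSet_Icc]
    apply (integrableOn_const_iff enorm_ne_top).mpr
    right
    exact measure_Icc_lt_top
  · -- differentiability
    apply Filter.Eventually.of_forall
    intro s
    intro σ hσ
    have h1 : HasDerivAt (fun σ : ℝ => (σ - s) / h) (1 / h) σ := by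
      simpa using ((hasDerivAt_id σ).sub_const s).div_const h
    have h2 : HasDerivAt (fun σ => j ((σ - s) / h)) (deriv j ((σ - s) / h) * (1 / h)) σ :=
      (((hj.differentiable (by simp)) _).hasDerivAt).comp σ h1
    have h4 := (h2.const_mul h⁻¹).smul_const (w s)
    convert h4 using 1
    congr 1
    field_simp

end ReynoldsAux

open ReynoldsAux

/-- Fixed-domain case of the generalized Reynolds transport theorem (Lemma 7):
for continuous bounded `u, v : ℝ → H` and mollifications `u^h, v^h` in time,
`∫₀ᵗ (⟨u, (v^h)'⟩ + ⟨v, (u^h)'⟩) → ⟨u(t), v(t)⟩ − ⟨u(0), v(0)⟩` as `h → 0⁺`. -/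
theorem reynolds_transport_fixed_domain
    {H : Type*} [NormedAddCommGroup H] [InnerProductSpace ℝ H] [CompleteSpace H]
    (u v : ℝ → H) (hu : Continuous u) (hv : Continuous v)
    (hub : ∃ M : ℝ, ∀ t, ‖u t‖ ≤ M) (hvb : ∃ M : ℝ, ∀ t, ‖v t‖ ≤ M)
    (j : ℝ → ℝ) (hj : ContDiff ℝ (⊤ : ℕ∞) j) (hjeven : ∀ x, j (-x) = j x)
    (hjnn : ∀ x, 0 ≤ j x) (hjsupp : Function.support j ⊆ Set.Ioo (-1 : ℝ) 1)
    (hjint : ∫ x, j x = 1) (t : ℝ) :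
    Tendsto
      (fun h : ℝ =>
        ∫ τ in (0 : ℝ)..t,
          ((inner ℝ (u τ) (deriv (fun σ => ∫ s, (h⁻¹ * j ((σ - s) / h)) • v s) τ) : ℝ)
            + (inner ℝ (v τ) (deriv (fun σ => ∫ s, (h⁻¹ * j ((σ - s) / h)) • u s) τ) : ℝ)))
      (nhdsWithin 0 (Set.Ioi 0))
      (nhds ((inner ℝ (u t) (v t) : ℝ) - (inner ℝ (u 0) (v 0) : ℝ))) := by
  obtain ⟨Mu, hMu⟩ := hub
  obtain ⟨Mv, hMv⟩ := hvb
  have hMu0 : 0 ≤ Mu := le_trans (norm_nonneg _) (hMu 0)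
  have hMv0 : 0 ≤ Mv := le_trans (norm_nonneg _) (hMv 0)
  set F : ℝ → ℝ → ℝ := fun τ σ => (inner ℝ (u τ) (v σ) : ℝ) + (inner ℝ (v τ) (u σ) : ℝ) with hFdef
  have hFc : Continuous fun p : ℝ × ℝ => F p.1 p.2 :=
    ((hu.comp continuous_fst).inner (hv.comp continuous_snd)).add
      ((hv.comp continuous_fst).inner (hu.comp continuous_snd))
  have hFb : ∀ x y, |F x y| ≤ Mu * Mv + Mv * Mu := by
    intro x y
    apply le_trans (abs_add_le _ _)
    apply add_le_add
    · exact le_trans (abs_real_inner_le_norm _ _)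
        (mul_le_mul (hMu x) (hMv y) (norm_nonneg _) hMu0)
    · exact le_trans (abs_real_inner_le_norm _ _)
        (mul_le_mul (hMv x) (hMu y) (norm_nonneg _) hMv0)
  have hFs : ∀ x y, F x y = F y x := by
    intro x y
    simp only [hFdef]
    rw [real_inner_comm (u x) (v y), real_inner_comm (v x) (u y), add_comm]
  -- the pointwise integrand identity
  have hint_eq : ∀ h : ℝ, 0 < h → ∀ τ : ℝ,
      ((inner ℝ (u τ) (deriv (fun σ => ∫ s, (h⁻¹ * j ((σ - s) / h)) • v s) τ) : ℝ)
        + (inner ℝ (v τ) (deriv (fun σ => ∫ s, (h⁻¹ * j ((σ - s) / h)) • u s) τ) : ℝ))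
      = ∫ σ, (h⁻¹ * h⁻¹ * deriv j ((τ - σ) / h)) * F τ σ := by
    intro h hh τ
    have hjdc : Continuous (deriv j) := hj.continuous_deriv (by simp)
    have hjdz : ∀ z, (1:ℝ) ≤ |z| → deriv j z = 0 := fun z hz => jd_supp hjnn hjsupp hz
    have hk2 : Continuous fun z : ℝ => h⁻¹ * h⁻¹ * deriv j (z / h) :=
      continuous_const.mul (hjdc.comp (continuous_id.div_const h))
    have hk2z : ∀ z, h ≤ |z| → h⁻¹ * h⁻¹ * deriv j (z / h) = 0 := by
      intro z hz
      have : (1:ℝ) ≤ |z / h| := by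
        rw [abs_div, abs_of_pos hh, le_div_iff₀ hh, one_mul]; exact hz
      rw [hjdz _ this, mul_zero]
    have hvi : Integrable (fun s => (h⁻¹ * h⁻¹ * deriv j ((τ - s) / h)) • v s) :=
      ker_integrable hk2 hh hk2z hv τ
    have hui : Integrable (fun s => (h⁻¹ * h⁻¹ * deriv j ((τ - s) / h)) • u s) :=
      ker_integrable hk2 hh hk2z hu τ
    rw [(moll_hasDerivAt hj hjnn hjsupp hv hMv hh τ).deriv,
      (moll_hasDerivAt hj hjnn hjsupp hu hMu hh τ).deriv]
    have e1 : ∀ σ : ℝ, (inner ℝ (u τ) ((h⁻¹ * h⁻¹ * deriv j ((τ - σ) / h)) • v σ) : ℝ)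
        = (h⁻¹ * h⁻¹ * deriv j ((τ - σ) / h)) * (inner ℝ (u τ) (v σ) : ℝ) :=
      fun σ => real_inner_smul_right _ _ _
    have e2 : ∀ σ : ℝ, (inner ℝ (v τ) ((h⁻¹ * h⁻¹ * deriv j ((τ - σ) / h)) • u σ) : ℝ)
        = (h⁻¹ * h⁻¹ * deriv j ((τ - σ) / h)) * (inner ℝ (v τ) (u σ) : ℝ) :=
      fun σ => real_inner_smul_right _ _ _
    have hI1 : Integrable (fun σ => (inner ℝ (u τ)
        ((h⁻¹ * h⁻¹ * deriv j ((τ - σ) / h)) • v σ) : ℝ)) := by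
      have := ker_integrable' hk2 hh hk2z
        (Continuous.inner (continuous_const : Continuous fun _ : ℝ => u τ) hv) τ
      exact this.congr (Filter.Eventually.of_forall (fun σ => (e1 σ).symm))
    have hI2 : Integrable (fun σ => (inner ℝ (v τ)
        ((h⁻¹ * h⁻¹ * deriv j ((τ - σ) / h)) • u σ) : ℝ)) := by
      have := ker_integrable' hk2 hh hk2z
        (Continuous.inner (continuous_const : Continuous fun _ : ℝ => v τ) hu) τ
      exact this.congr (Filter.Eventually.of_forall (fun σ => (e2 σ).symm))
    rw [← integral_inner hvi (u τ), ← integral_inner hui (v τ), ← integral_add hI1 hI2]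
    apply integral_congr_ae
    apply Filter.Eventually.of_forall
    intro σ
    beta_reduce
    rw [e1 σ, e2 σ]
    show _ = (h⁻¹ * h⁻¹ * deriv j ((τ - σ) / h)) * F τ σ
    rw [hFdef]
    ring
  rcases lt_trichotomy 0 t with ht | ht | ht
  · -- 0 < t
    have hkey := key hj hjeven hjnn hjsupp hjint hFc hFb hFs ht
    have hval : ((inner ℝ (u t) (v t) : ℝ) - (inner ℝ (u 0) (v 0) : ℝ)) = (F t t - F 0 0) / 2 := by
      simp only [hFdef]
      rw [real_inner_comm (v t) (u t), real_inner_comm (v 0) (u 0)]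
      ring
    rw [hval]
    apply Tendsto.congr' ?_ hkey
    filter_upwards [self_mem_nhdsWithin] with h hh
    rw [Set.mem_Ioi] at hh
    rw [intervalIntegral.integral_of_le ht.le]
    exact setIntegral_congr_fun measurableSet_Ioc (fun τ _ => (hint_eq h hh τ).symm)
  · -- t = 0
    rw [← ht]
    have : (fun h : ℝ =>
        ∫ τ in (0 : ℝ)..(0:ℝ),
          ((inner ℝ (u τ) (deriv (fun σ => ∫ s, (h⁻¹ * j ((σ - s) / h)) • v s) τ) : ℝ)
            + (inner ℝ (v τ) (deriv (fun σ => ∫ s, (h⁻¹ * j ((σ - s) / h)) • u s) τ) : ℝ)))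
        = fun _ => (0:ℝ) := funext (fun h => intervalIntegral.integral_same)
    rw [this, sub_self]
    exact tendsto_const_nhds
  · -- t < 0
    have hkey := (key hj hjeven hjnn hjsupp hjint hFc hFb hFs ht).neg
    have hval : ((inner ℝ (u t) (v t) : ℝ) - (inner ℝ (u 0) (v 0) : ℝ)) = -((F 0 0 - F t t) / 2) := by
      simp only [hFdef]
      rw [real_inner_comm (v t) (u t), real_inner_comm (v 0) (u 0)]
      ring
    rw [hval]
    apply Tendsto.congr' ?_ hkey
    filter_upwards [self_mem_nhdsWithin] with h hh
    rw [Set.mem_Ioi] at hh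
    rw [intervalIntegral.integral_symm, intervalIntegral.integral_of_le ht.le]
    rw [setIntegral_congr_fun measurableSet_Ioc (fun τ _ => (hint_eq h hh τ).symm)]
end
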